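/- The operad of elements Ω/X of any dendroidal set X is Σ-free: for every n and objects (S₁,α₁),…,(Sₙ,αₙ),(R,β), the symmetric group Σₙ acts freely on the union over σ ∈ Σₙ of the operation sets Ω/X((S_{σ(1)},α_{σ(1)}),…,(S_{σ(n)},α_{σ(n)});(R,β)). -/
import Mathlib


/-- A finite rooted tree, encoded via its edges and the `parent` function. -/
structure FRTree where
  E : Type
  root : E
  parent : E → E
  parent_root : parent root = root

/-- The edge poset: `e ≤ f` iff the path from `e` to the root contains `f`. -/
def FRTree.le (T : FRTree) (e f : T.E) : Prop := ∃ n, T.parent^[n] e = f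

/-- A minimal edge. -/
def FRTree.MinimalEdge (T : FRTree) (m : T.E) : Prop :=
  ∀ g, T.parent g = m → g = m

/-- The edges of the forest `S₁ ⊕ … ⊕ Sₙ`. -/
abbrev forestE {n : ℕ} (S : Fin n → FRTree) := Σ i : Fin n, (S i).E

theorem cast_root_aux {T U : FRTree} (h : T = U) :
    cast (congrArg FRTree.E h).symm U.root = T.root := by subst h; rfl

/-- the operad of elements `Ω/X` of a dendroidal set `X` is
`Σ`-free.  Operations of `Ω/X` with inputs `(S₁,α₁), …, (Sₙ,αₙ)` and output
`(R,β)` are wide independent maps of forests `f : S₁ ⊕ … ⊕ Sₙ → R` lying over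
`X` (the values of `X` on edges being recorded by the abstract colouring data
`V`, `α`, `β`); the symmetric group acts by permuting the input constituents.
If a permutation `σ` fixes such an operation — which presupposes that it fixes
the list of input objects, whence the hypotheses `hS`, `hα` — then `σ` is the
identity, i.e. the `Σₙ`-action on the union of the operation sets is free. -/
theorem operad_of_elements_sigma_free {n : ℕ}
    (S : Fin n → FRTree) (R : FRTree)
    (V : Type) (α : ∀ i, (S i).E → V) (β : R.E → V)
    (σ : Equiv.Perm (Fin n))
    (hS : ∀ i, S (σ i) = S i)
    (hα : ∀ i (a : (S i).E),
      α (σ i) (cast (congrArg FRTree.E (hS i)).symm a) = α i a)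
    (f : forestE S → R.E)
    (hmono : ∀ i a b, (S i).le a b → R.le (f ⟨i, a⟩) (f ⟨i, b⟩))
    (hindep : ∀ i j, i ≠ j →
      ¬ R.le (f ⟨i, (S i).root⟩) (f ⟨j, (S j).root⟩))
    (hwide : ∀ m, R.MinimalEdge m → ∃ i k, R.parent^[k] m = f ⟨i, (S i).root⟩)
    (hover : ∀ i a, β (f ⟨i, a⟩) = α i a)
    (hfix : ∀ i (a : (S i).E),
      f ⟨σ i, cast (congrArg FRTree.E (hS i)).symm a⟩ = f ⟨i, a⟩) :
    σ = 1 := by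
  ext i
  by_contra h
  have hne : σ i ≠ i := fun e => h (by simp [e])
  have hroot : cast (congrArg FRTree.E (hS i)).symm (S i).root = (S (σ i)).root :=
    cast_root_aux (hS i)
  have key : f ⟨σ i, (S (σ i)).root⟩ = f ⟨i, (S i).root⟩ := by
    rw [← hroot]; exact hfix i (S i).root
  exact hindep (σ i) i hne (key ▸ ⟨0, rfl⟩)
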